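/- For every (v⊥, w⊥) in the orthogonal complement F⊥ of F in V₁ × V₂ (with respect to the product inner product) one has ‖w⊥‖² ≥ γ · ‖v⊥‖². -/

import Mathlib

/-!
Orthogonality to the graph of `F̃` forces `w⊥ = -F̃* v⊥`, so `‖w⊥‖² = ⟪F̃ F̃* v⊥, v⊥⟫`.
The hypothesis makes `F̃`, hence `F̃*`, a contraction, so the eigenvalues of the positive
operator `F̃ F̃*` lie in `[0, 1]`; their product `det (F̃ F̃*) = det (F̃* F̃) = γ` is then at most
the smallest of them.
-/

open RealInnerProductSpace

theorem LinearMap.det_comp_comm_of_finrank_eq {K M N : Type*} [Field K]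
    [AddCommGroup M] [Module K M] [AddCommGroup N] [Module K N]
    [FiniteDimensional K M] [FiniteDimensional K N]
    (h : Module.finrank K M = Module.finrank K N) (f : M →ₗ[K] N) (g : N →ₗ[K] M) :
    (g ∘ₗ f).det = (f ∘ₗ g).det := by
  let bM := Module.finBasis K M
  let bN := (Module.finBasis K N).reindex (finCongr h.symm)
  rw [← det_toMatrix bM, ← det_toMatrix bN, toMatrix_comp bM bN bM, toMatrix_comp bN bM bN,
    Matrix.det_mul, Matrix.det_mul, mul_comm]

section

variable {E F : Type*} [NormedAddCommGroup E] [InnerProductSpace ℝ E] [FiniteDimensional ℝ E]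
  [NormedAddCommGroup F] [InnerProductSpace ℝ F] [FiniteDimensional ℝ F]

theorem LinearMap.IsPositive.det_mul_norm_sq_le_inner {T : E →ₗ[ℝ] E} (hT : T.IsPositive)
    (hT_le : ∀ x, ⟪T x, x⟫ ≤ ‖x‖ ^ 2) (v : E) : T.det * ‖v‖ ^ 2 ≤ ⟪T v, v⟫ := by
  let b := hT.isSymmetric.eigenvectorBasis rfl
  let μ := hT.isSymmetric.eigenvalues rfl
  have hb : ∀ i, T (b i) = μ i • b i := hT.isSymmetric.apply_eigenvectorBasis rfl
  have hμ_nonneg : ∀ i, 0 ≤ μ i := hT.nonneg_eigenvalues rfl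
  have hμ_le_one : ∀ i, μ i ≤ 1 := fun i => by
    simpa [hb, real_inner_smul_left, b.orthonormal.1 i] using hT_le (b i)
  have hdet : T.det = ∏ i, μ i := by simpa using hT.isSymmetric.det_eq_prod_eigenvalues rfl
  have hprod_le : ∀ i, ∏ j, μ j ≤ μ i := fun i => by
    rw [← Finset.prod_erase_mul _ _ (Finset.mem_univ i)]
    exact mul_le_of_le_one_left (hμ_nonneg i)
      (Finset.prod_le_one (fun j _ => hμ_nonneg j) (fun j _ => hμ_le_one j))
  have hinner : ⟪T v, v⟫ = ∑ i, μ i * ⟪v, b i⟫ ^ 2 := by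
    rw [← b.sum_inner_mul_inner]
    refine Finset.sum_congr rfl fun i _ => ?_
    rw [hT.isSymmetric, hb, real_inner_smul_right, real_inner_comm v]
    ring
  have hnorm : ‖v‖ ^ 2 = ∑ i, ⟪v, b i⟫ ^ 2 := by
    rw [← real_inner_self_eq_norm_sq, ← b.sum_inner_mul_inner]
    simp only [real_inner_comm v, sq]
  rw [hdet, hinner, hnorm, Finset.mul_sum]
  exact Finset.sum_le_sum fun i _ => mul_le_mul_of_nonneg_right (hprod_le i) (sq_nonneg _)

theorem LinearMap.det_adjoint_comp_self_mul_norm_sq_le {A : E →ₗ[ℝ] F}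
    (hA : ∀ x, ‖A x‖ ≤ ‖x‖) (v : E) : (A.adjoint ∘ₗ A).det * ‖v‖ ^ 2 ≤ ‖A v‖ ^ 2 := by
  have hT : ∀ x, ⟪(A.adjoint ∘ₗ A) x, x⟫ = ‖A x‖ ^ 2 := fun x => by
    rw [comp_apply, adjoint_inner_left, real_inner_self_eq_norm_sq]
  rw [← hT]
  refine A.isPositive_adjoint_comp_self.det_mul_norm_sq_le_inner (fun x => ?_) v
  rw [hT]
  exact pow_le_pow_left₀ (norm_nonneg _) (hA x) 2

theorem LinearMap.norm_adjoint_apply_le {A : E →ₗ[ℝ] F} (hA : ∀ x, ‖A x‖ ≤ ‖x‖) (y : F) :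
    ‖A.adjoint y‖ ≤ ‖y‖ := by
  have h : ‖A.adjoint y‖ ^ 2 ≤ ‖A.adjoint y‖ * ‖y‖ := calc
    ‖A.adjoint y‖ ^ 2 = ⟪A (A.adjoint y), y⟫ := by
      rw [← adjoint_inner_right, real_inner_self_eq_norm_sq]
    _ ≤ ‖A (A.adjoint y)‖ * ‖y‖ := real_inner_le_norm _ _
    _ ≤ ‖A.adjoint y‖ * ‖y‖ := by gcongr; exact hA _
  nlinarith [norm_nonneg (A.adjoint y), norm_nonneg y]

theorem LinearMap.eq_neg_adjoint_of_inner_add_inner_eq_zero (A : E →ₗ[ℝ] F) {u : F} {w : E}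
    (h : ∀ z, ⟪u, A z⟫ + ⟪w, z⟫ = 0) : w = -A.adjoint u := by
  refine eq_neg_of_add_eq_zero_right (inner_self_eq_zero (𝕜 := ℝ) |>.mp ?_)
  rw [inner_add_left, adjoint_inner_left]
  exact h _

end

theorem stmt_3_general {V₁ V₂ : Type*}
    [NormedAddCommGroup V₁] [InnerProductSpace ℝ V₁]
    [NormedAddCommGroup V₂] [InnerProductSpace ℝ V₂]
    [FiniteDimensional ℝ V₁] [FiniteDimensional ℝ V₂]
    (l : ℕ) (hl₁ : Module.finrank ℝ V₁ = l) (hl₂ : Module.finrank ℝ V₂ = l)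
    (Ft : V₂ →ₗ[ℝ] V₁)
    (F : Submodule ℝ (V₁ × V₂))
    (hF : ∀ p : V₁ × V₂, p ∈ F ↔ p.1 = Ft p.2)
    (hle : ∀ p ∈ F, ‖(p : V₁ × V₂).1‖ ≤ ‖(p : V₁ × V₂).2‖)
    (γ : ℝ) (hγ : γ = LinearMap.det ((LinearMap.adjoint Ft).comp Ft)) :
    ∀ x : V₁ × V₂, (∀ p ∈ F, ⟪x.1, (p : V₁ × V₂).1⟫ + ⟪x.2, (p : V₁ × V₂).2⟫ = 0) →
      ‖x.2‖ ^ 2 ≥ γ * ‖x.1‖ ^ 2 := by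
  intro x hx
  have hgraph : ∀ w, (Ft w, w) ∈ F := fun w => (hF _).2 rfl
  have hFt : ∀ w, ‖Ft w‖ ≤ ‖w‖ := fun w => hle _ (hgraph w)
  have hx₂ : x.2 = -Ft.adjoint x.1 :=
    Ft.eq_neg_adjoint_of_inner_add_inner_eq_zero fun w => hx _ (hgraph w)
  have hγ' : γ = (Ft ∘ₗ Ft.adjoint).det := by
    rw [hγ, LinearMap.det_comp_comm_of_finrank_eq (hl₂.trans hl₁.symm)]
  have hbound := LinearMap.det_adjoint_comp_self_mul_norm_sq_le
    (LinearMap.norm_adjoint_apply_le hFt) x.1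
  rw [LinearMap.adjoint_adjoint] at hbound
  rw [hx₂, norm_neg, hγ']
  exact hbound

/-- Let `V₁, V₂` be real inner product spaces of dimension `l`, let `F` be the
graph of a linear isomorphism `F̃ : V₂ → V₁` with `‖v‖ ≤ ‖w‖` for all
`(v,w) ∈ F`, and let `γ = det(F̃* ∘ F̃)`.  Then for every `(v⊥, w⊥)` in the
orthogonal complement of `F` in `V₁ × V₂` (with respect to the product inner
product `⟨(v,w),(v',w')⟩ = ⟨v,v'⟩ + ⟨w,w'⟩`) one has `‖w⊥‖² ≥ γ·‖v⊥‖²`. -/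
theorem stmt_3 {V₁ V₂ : Type*}
    [NormedAddCommGroup V₁] [InnerProductSpace ℝ V₁]
    [NormedAddCommGroup V₂] [InnerProductSpace ℝ V₂]
    [FiniteDimensional ℝ V₁] [FiniteDimensional ℝ V₂]
    (l : ℕ) (hl₁ : Module.finrank ℝ V₁ = l) (hl₂ : Module.finrank ℝ V₂ = l)
    (Ft : V₂ →ₗ[ℝ] V₁) (hFt : Function.Bijective Ft)
    (F : Submodule ℝ (V₁ × V₂))
    (hF : ∀ p : V₁ × V₂, p ∈ F ↔ p.1 = Ft p.2)
    (hle : ∀ p ∈ F, ‖(p : V₁ × V₂).1‖ ≤ ‖(p : V₁ × V₂).2‖)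
    (γ : ℝ) (hγ : γ = LinearMap.det ((LinearMap.adjoint Ft).comp Ft)) :
    ∀ x : V₁ × V₂, (∀ p ∈ F, ⟪x.1, (p : V₁ × V₂).1⟫ + ⟪x.2, (p : V₁ × V₂).2⟫ = 0) →
      ‖x.2‖ ^ 2 ≥ γ * ‖x.1‖ ^ 2 :=
  stmt_3_general l hl₁ hl₂ Ft F hF hle γ hγ
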